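/- Let β′ ≥ 1/2 be a real number, let c > 0, and suppose δ ∈ (0,1) satisfies δ·(log(2/δ))^{β′} = c. Then 1/δ ≤ ((8β′)^{β′}/c)^{4/3}. -/
import Mathlib


/-- If `δ ∈ (0,1)` solves `δ (log(2/δ))^{β'} = c` with `β' ≥ 1/2`, then
`1/δ ≤ ((8β')^{β'}/c)^{4/3}`. -/
theorem inv_delta_le_rpow_bound
    (β' c δ : ℝ) (hβ' : 1 / 2 ≤ β') (hc : 0 < c) (hδ0 : 0 < δ) (hδ1 : δ < 1)
    (hδ : δ * Real.log (2 / δ) ^ β' = c) :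
    1 / δ ≤ ((8 * β') ^ β' / c) ^ ((4 : ℝ) / 3) := by
  have hβ0 : (0:ℝ) < β' := lt_of_lt_of_le (by norm_num) hβ'
  set L := Real.log (2 / δ) with hLdef
  have h2δ : (1:ℝ) < 2 / δ := by
    rw [lt_div_iff₀ hδ0]; linarith
  have hLpos : 0 < L := Real.log_pos h2δ
  have hε : (0:ℝ) < 1 / (4 * β') := by positivity
  have key : L ≤ 8 * β' * (1/δ) ^ (1/(4*β')) := by
    have h1 : L ≤ (2/δ) ^ (1/(4*β')) / (1/(4*β')) :=
      Real.log_le_rpow_div (by positivity) hε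
    have h2 : (2/δ) ^ (1/(4*β')) = 2 ^ (1/(4*β')) * (1/δ) ^ (1/(4*β')) := by
      rw [div_eq_mul_one_div, Real.mul_rpow (by norm_num) (by positivity)]
    have h3 : (2:ℝ) ^ (1/(4*β')) ≤ 2 := by
      calc (2:ℝ) ^ (1/(4*β')) ≤ 2 ^ (1:ℝ) := by
            apply Real.rpow_le_rpow_of_exponent_le (by norm_num)
            rw [div_le_one (by positivity)]; linarith
        _ = 2 := Real.rpow_one 2
    have h4 : (2/δ) ^ (1/(4*β')) / (1/(4*β')) = 4*β' * (2/δ) ^ (1/(4*β')) := by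
      field_simp
    calc L ≤ 4*β' * (2/δ) ^ (1/(4*β')) := by rw [← h4]; exact h1
      _ = 4*β' * (2 ^ (1/(4*β')) * (1/δ) ^ (1/(4*β'))) := by rw [h2]
      _ ≤ 4*β' * (2 * (1/δ) ^ (1/(4*β'))) := by
          apply mul_le_mul_of_nonneg_left _ (by positivity)
          exact mul_le_mul_of_nonneg_right h3 (by positivity)
      _ = 8 * β' * (1/δ) ^ (1/(4*β')) := by ring
  have hLb' : L ^ β' ≤ (8*β') ^ β' * (1/δ) ^ ((1:ℝ)/4) := by
    have h5 := Real.rpow_le_rpow hLpos.le key hβ0.le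
    rw [Real.mul_rpow (by positivity) (by positivity),
        ← Real.rpow_mul (by positivity)] at h5
    have : 1/(4*β') * β' = (1:ℝ)/4 := by field_simp
    rwa [this] at h5
  have hfin : c * (1/δ) ^ ((3:ℝ)/4) ≤ (8*β')^β' := by
    have h5 : δ * (1/δ) ^ ((3:ℝ)/4) * (1/δ) ^ ((1:ℝ)/4) = 1 := by
      rw [mul_assoc, ← Real.rpow_add (by positivity)]
      norm_num
      field_simp
    calc c * (1/δ)^((3:ℝ)/4) = δ * L^β' * (1/δ)^((3:ℝ)/4) := by rw [← hδ]
      _ ≤ δ * ((8*β')^β' * (1/δ)^((1:ℝ)/4)) * (1/δ)^((3:ℝ)/4) := by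
          have := mul_le_mul_of_nonneg_left hLb' hδ0.le
          exact mul_le_mul_of_nonneg_right this (by positivity)
      _ = (8*β')^β' * (δ * (1/δ)^((3:ℝ)/4) * (1/δ)^((1:ℝ)/4)) := by ring
      _ = (8*β')^β' := by rw [h5, mul_one]
  have h6 : (1/δ) ^ ((3:ℝ)/4) ≤ (8*β')^β'/c := by
    rw [le_div_iff₀ hc]
    linarith [hfin]
  have h7 := Real.rpow_le_rpow (by positivity) h6 (by norm_num : (0:ℝ) ≤ 4/3)
  rwa [← Real.rpow_mul (by positivity), show (3:ℝ)/4 * (4/3) = 1 by norm_num,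
    Real.rpow_one] at h7
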